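/- arXiv:1407.7110 — 3 statements merged into one kernel-verified Lean document; each statement's English description precedes it below -/
import Mathlib

section
/- In the special case where the '0' block is empty (E = E+), define W(s) := R+^{-1}(Q++ − s·D+) for an invertible diagonal R+ with positive entries, a subgenerator Q++ (off-diagonal nonnegative, eigenvalues with negative real part), and diagonal D+ with nonnegative entries. Then for every s ≥ 0, all eigenvalues of W(s) have negative real part; in particular W(s) is invertible. -/
/-!
Suppose `μ` were an eigenvalue of `W(s)` with `Re μ ≥ 0` and eigenvector `v`. Row `i` of
`Q v = (s D + μ R) v` reads `(z_i - Q_ii) v_i = ∑_{j ≠ i} Q_ij v_j` with `Re z_i ≥ 0`, so by the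
triangle inequality and `Q_ij ≥ 0` off the diagonal the vector `u = |v|` satisfies `Q u ≥ 0`.
This is impossible for a stable Metzler matrix: for large `c` the matrix `N = Q + c I` is
nonnegative with spectrum in the open disc of radius `c`, so `‖N^k‖ < c^k` for some `k` by
Gelfand's formula, whereas `N u ≥ c u` gives `N^k u ≥ c^k u`.
-/

open Matrix Filter

lemma Complex.eventually_norm_add_ofReal_lt {μ : ℂ} (hμ : μ.re < 0) :
    ∀ᶠ c : ℝ in atTop, ‖μ + c‖ < c := by
  filter_upwards [eventually_gt_atTop (Complex.normSq μ / (-(2 * μ.re))), eventually_gt_atTop 0]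
    with c hc hc0
  rw [div_lt_iff₀ (by linarith)] at hc
  have hsq : ‖μ + c‖ ^ 2 < c ^ 2 := by
    rw [Complex.sq_norm, Complex.normSq_add, Complex.normSq_ofReal]
    simp only [Complex.conj_ofReal, Complex.mul_re, Complex.ofReal_re, Complex.ofReal_im]
    nlinarith
  exact lt_of_pow_lt_pow_left₀ 2 hc0.le hsq

lemma spectrum.eventually_norm_pow_lt_pow_of_forall_norm_lt {A : Type*} [NormedRing A]
    [NormedAlgebra ℂ A] [CompleteSpace A] [Nontrivial A] (a : A) {c : ℝ}
    (h : ∀ z ∈ spectrum ℂ a, ‖z‖ < c) :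
    ∀ᶠ k : ℕ in atTop, ‖a ^ k‖ < c ^ k := by
  obtain ⟨z, hz⟩ := spectrum.nonempty a
  have hc : 0 < c := (norm_nonneg z).trans_lt (h z hz)
  have hrad : spectralRadius ℂ a < ENNReal.ofReal c :=
    spectrum.spectralRadius_lt_of_forall_lt a fun z hz => by
      rw [← NNReal.coe_lt_coe, coe_nnnorm, Real.coe_toNNReal _ hc.le]
      exact h z hz
  filter_upwards [(spectrum.pow_norm_pow_one_div_tendsto_nhds_spectralRadius a).eventually_lt_const
    hrad, eventually_ge_atTop 1] with k hk hk1
  rwa [ENNReal.ofReal_lt_ofReal_iff hc, one_div, Real.rpow_inv_lt_iff_of_pos (norm_nonneg _) hc.le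
    (by exact_mod_cast hk1), Real.rpow_natCast] at hk

theorem Matrix.pow_smul_le_pow_mulVec {ι R : Type*} [Fintype ι] [DecidableEq ι] [CommSemiring R]
    [PartialOrder R] [IsOrderedRing R] {N : Matrix ι ι R} (hN : ∀ i j, 0 ≤ N i j) {c : R}
    (hc : 0 ≤ c) {u : ι → R} (hu : c • u ≤ N *ᵥ u) (k : ℕ) : c ^ k • u ≤ N ^ k *ᵥ u := by
  have mono : Monotone (N *ᵥ ·) := fun v w hvw i =>
    Finset.sum_le_sum fun j _ => mul_le_mul_of_nonneg_left (hvw j) (hN i j)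
  induction k with
  | zero => simp
  | succ k ih =>
    calc c ^ (k + 1) • u = c ^ k • (c • u) := by rw [pow_succ, mul_smul]
      _ ≤ c ^ k • (N *ᵥ u) := smul_le_smul_of_nonneg_left hu (pow_nonneg hc k)
      _ = N *ᵥ (c ^ k • u) := (mulVec_smul N (c ^ k) u).symm
      _ ≤ N *ᵥ (N ^ k *ᵥ u) := mono ih
      _ = N ^ (k + 1) *ᵥ u := by rw [mulVec_mulVec, pow_succ']

attribute [local instance] Matrix.linftyOpNormedAddCommGroup Matrix.linftyOpNormedSpace
  Matrix.linftyOpNormedRing Matrix.linftyOpNormedAlgebra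

lemma Matrix.linfty_opNorm_map_ofReal {ι : Type*} [Fintype ι] (A : Matrix ι ι ℝ) :
    ‖A.map Complex.ofReal‖ = ‖A‖ := by
  simp [Matrix.linfty_opNorm_def]

variable {ι : Type*} [Fintype ι] [DecidableEq ι]

theorem Matrix.eq_zero_of_nonneg_of_mulVec_nonneg {Q : Matrix ι ι ℝ}
    (hoff : ∀ i j, i ≠ j → 0 ≤ Q i j)
    (hspec : ∀ μ ∈ spectrum ℂ (Q.map Complex.ofReal), μ.re < 0)
    {u : ι → ℝ} (hu : 0 ≤ u) (hQu : 0 ≤ Q *ᵥ u) : u = 0 := by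
  by_contra hu0
  have : Nonempty ι := (Function.ne_iff.mp hu0).nonempty
  obtain ⟨c, hc_spec, hc_diag, hc⟩ : ∃ c : ℝ, (∀ μ ∈ spectrum ℂ (Q.map Complex.ofReal),
      ‖μ + c‖ < c) ∧ (∀ i, -Q i i ≤ c) ∧ 0 < c :=
    (((Matrix.finite_spectrum _).eventually_all.2 fun μ hμ =>
      Complex.eventually_norm_add_ofReal_lt (hspec μ hμ)).and
      ((eventually_all.2 fun i => eventually_ge_atTop (-Q i i)).and
        (eventually_gt_atTop 0))).exists
  set N := Q + c • (1 : Matrix ι ι ℝ) with hN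
  have hN_nonneg : ∀ i j, 0 ≤ N i j := by
    intro i j
    rcases eq_or_ne i j with rfl | hij
    · simp only [hN, add_apply, smul_apply, one_apply_eq, smul_eq_mul, mul_one]
      linarith [hc_diag i]
    · simpa [hN, hij] using hoff i j hij
  have hNu : c • u ≤ N *ᵥ u := by
    rw [hN, add_mulVec, smul_mulVec, one_mulVec]
    exact le_add_of_nonneg_left hQu
  have hN_spec : ∀ z ∈ spectrum ℂ (N.map Complex.ofReal), ‖z‖ < c := by
    intro z hz
    have hmap : N.map Complex.ofReal = algebraMap ℂ _ (c : ℂ) + Q.map Complex.ofReal := by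
      ext i j
      by_cases hij : i = j <;> simp [hN, hij, Algebra.algebraMap_eq_smul_one, add_comm]
    rw [hmap, ← sub_add_cancel z (c : ℂ), spectrum.add_mem_add_iff] at hz
    simpa using hc_spec _ hz
  obtain ⟨k, hk⟩ := (spectrum.eventually_norm_pow_lt_pow_of_forall_norm_lt _ hN_spec).exists
  rw [← show (N ^ k).map Complex.ofReal = N.map Complex.ofReal ^ k from
    Matrix.map_pow N Complex.ofRealHom k, linfty_opNorm_map_ofReal] at hk
  have hle : ‖c ^ k • u‖ ≤ ‖N ^ k‖ * ‖u‖ := by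
    refine (pi_norm_le_iff_of_nonneg (by positivity)).2 fun i => ?_
    have hi : 0 ≤ (c ^ k • u) i := mul_nonneg (pow_nonneg hc.le k) (hu i)
    rw [Real.norm_of_nonneg hi]
    exact (Matrix.pow_smul_le_pow_mulVec hN_nonneg hc.le hNu k i).trans
      ((Real.le_norm_self _).trans ((norm_le_pi_norm _ i).trans (linfty_opNorm_mulVec _ _)))
  rw [norm_smul, Real.norm_of_nonneg (pow_nonneg hc.le k)] at hle
  exact (mul_lt_mul_of_pos_right hk (norm_pos_iff.mpr hu0)).not_ge hle

theorem Matrix.mulVec_norm_nonneg_of_mulVec_eq {Q : Matrix ι ι ℝ}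
    (hoff : ∀ i j, i ≠ j → 0 ≤ Q i j) {v z : ι → ℂ} (hz : ∀ i, 0 ≤ (z i).re)
    (hv : Q.map Complex.ofReal *ᵥ v = fun i => z i * v i) : 0 ≤ Q *ᵥ fun j => ‖v j‖ := by
  intro i
  have hrow : ∑ j ∈ Finset.univ.erase i, (Q i j : ℂ) * v j = (z i - Q i i) * v i := by
    have h := congrFun hv i
    rw [mulVec, dotProduct, ← Finset.add_sum_erase _ _ (Finset.mem_univ i)] at h
    simp only [map_apply] at h
    linear_combination h
  calc (0 : ℝ) ≤ (z i).re * ‖v i‖ := mul_nonneg (hz i) (norm_nonneg _)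
    _ = Q i i * ‖v i‖ + (z i - Q i i).re * ‖v i‖ := by
      rw [Complex.sub_re, Complex.ofReal_re]; ring
    _ ≤ Q i i * ‖v i‖ + ‖(z i - Q i i) * v i‖ := by
      rw [norm_mul]; gcongr; exact Complex.re_le_norm _
    _ ≤ Q i i * ‖v i‖ + ∑ j ∈ Finset.univ.erase i, Q i j * ‖v j‖ := by
      rw [← hrow]
      gcongr
      refine (norm_sum_le _ _).trans_eq (Finset.sum_congr rfl fun j hj => ?_)
      rw [norm_mul, Complex.norm_real,
        Real.norm_of_nonneg (hoff i j (Finset.ne_of_mem_erase hj).symm)]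
    _ = (Q *ᵥ fun j => ‖v j‖) i := by
      rw [mulVec, dotProduct, ← Finset.add_sum_erase _ _ (Finset.mem_univ i)]

theorem Matrix.re_neg_of_mem_spectrum_diagonal_inv_mul {Q : Matrix ι ι ℝ}
    (hoff : ∀ i j, i ≠ j → 0 ≤ Q i j)
    (hspec : ∀ μ ∈ spectrum ℂ (Q.map Complex.ofReal), μ.re < 0)
    {r d : ι → ℝ} (hr : ∀ i, 0 < r i) (hd : ∀ i, 0 ≤ d i) {μ : ℂ}
    (hμ : μ ∈ spectrum ℂ (((diagonal r)⁻¹ * (Q - diagonal d)).map Complex.ofReal)) :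
    μ.re < 0 := by
  by_contra! hre
  obtain ⟨v, hv, hv0⟩ : ∃ v,
      ((diagonal r)⁻¹ * (Q - diagonal d)).map Complex.ofReal *ᵥ v = μ • v ∧ v ≠ 0 := by
    rw [← spectrum_toLin', ← Module.End.hasEigenvalue_iff_mem_spectrum] at hμ
    simpa [Module.End.hasEigenvector_iff] using hμ.exists_hasEigenvector
  have hQv : Q.map Complex.ofReal *ᵥ v = fun i => (d i + μ * r i) * v i := by
    have hdet : IsUnit (diagonal r).det := by
      rw [← isUnit_iff_isUnit_det, isUnit_diagonal, Pi.isUnit_iff]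
      exact fun i => (hr i).ne'.isUnit
    have map_mul : ∀ A B : Matrix ι ι ℝ,
        (A * B).map Complex.ofReal = A.map Complex.ofReal * B.map Complex.ofReal :=
      fun _ _ => Matrix.map_mul (f := Complex.ofRealHom)
    have h : (diagonal r * ((diagonal r)⁻¹ * (Q - diagonal d))).map Complex.ofReal *ᵥ v =
        (Q - diagonal d).map Complex.ofReal *ᵥ v := by
      rw [mul_nonsing_inv_cancel_left _ _ hdet]
    rw [map_mul, ← mulVec_mulVec, hv] at h
    funext i
    have hi := congrFun h i
    rw [diagonal_map Complex.ofReal_zero, mulVec_diagonal, Matrix.map_sub _ Complex.ofReal_sub,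
      sub_mulVec, Pi.sub_apply, diagonal_map Complex.ofReal_zero, mulVec_diagonal,
      Pi.smul_apply, smul_eq_mul] at hi
    linear_combination -hi
  have hnorm := Matrix.eq_zero_of_nonneg_of_mulVec_nonneg hoff hspec (fun j => norm_nonneg (v j))
    (Matrix.mulVec_norm_nonneg_of_mulVec_eq hoff (z := fun i => d i + μ * r i)
      (fun i => by simpa using add_nonneg (hd i) (mul_nonneg hre (hr i).le)) hQv)
  exact hv0 (funext fun j => norm_eq_zero.mp (congrFun hnorm j))

theorem Matrix.isUnit_of_isUnit_map {K L : Type*} [Field K] [CommRing L] [Nontrivial L]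
    (f : K →+* L) {A : Matrix ι ι K} (h : IsUnit (A.map f)) : IsUnit A := by
  rw [isUnit_iff_isUnit_det] at h ⊢
  rw [← RingHom.mapMatrix_apply, ← RingHom.map_det] at h
  exact isUnit_iff_ne_zero.2 fun h0 => by simp [h0] at h

/-- If `Q++` is a subgenerator, `R+` a positive diagonal matrix and `D+` a nonnegative
diagonal matrix, then `W(s) = R+⁻¹(Q++ − s·D+)` is stable for every `s ≥ 0`;
in particular it is invertible. -/
theorem stmt_13 (n : ℕ) (Qpp : Matrix (Fin n) (Fin n) ℝ)
    (hoff : ∀ i j, i ≠ j → 0 ≤ Qpp i j)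
    (hspec : ∀ μ ∈ spectrum ℂ (Qpp.map Complex.ofReal), μ.re < 0)
    (r d : Fin n → ℝ) (hr : ∀ i, 0 < r i) (hd : ∀ i, 0 ≤ d i)
    (W : ℝ → Matrix (Fin n) (Fin n) ℝ)
    (hW : ∀ s, W s = (Matrix.diagonal r)⁻¹ * (Qpp - s • Matrix.diagonal d)) :
    ∀ s : ℝ, 0 ≤ s →
      (∀ μ ∈ spectrum ℂ ((W s).map Complex.ofReal), μ.re < 0) ∧ IsUnit (W s) := by
  intro s hs
  have hWs : W s = (diagonal r)⁻¹ * (Qpp - diagonal (s • d)) := by rw [hW, diagonal_smul]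
  have hstable : ∀ μ ∈ spectrum ℂ ((W s).map Complex.ofReal), μ.re < 0 := fun μ hμ =>
    re_neg_of_mem_spectrum_diagonal_inv_mul hoff hspec hr (fun i => mul_nonneg hs (hd i))
      (hWs ▸ hμ)
  have hzero : (0 : ℂ) ∉ spectrum ℂ ((W s).map Complex.ofReal) := fun h => (hstable 0 h).false
  exact ⟨hstable, isUnit_of_isUnit_map Complex.ofRealHom ((spectrum.zero_notMem_iff ℂ).1 hzero)⟩
end

section
/- Let A be an n×n real matrix with nonnegative off-diagonal entries, strictly negative diagonal entries, and row sums ≤ 0, with at least one row sum strictly negative in every communicating class (equivalently, all eigenvalues of A have negative real part). Then for any diagonal matrix R with positive diagonal entries, all eigenvalues of R^{-1}·A have negative real part. -/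
/-!
Gershgorin's theorem places every eigenvalue of a real matrix with nonnegative off-diagonal
entries and nonpositive row sums in a disc `closedBall c (-c)` with `c ≤ 0`, i.e. in the open
left half-plane or at `0`. Dividing the rows by positive numbers keeps both sign conditions and
keeps the matrix nonsingular, which rules out the eigenvalue `0`.
-/

open Matrix

theorem Complex.re_neg_of_dist_ofReal_le {z : ℂ} {c : ℝ} (hc : c ≤ 0) (hz : dist z c ≤ -c)
    (h0 : z ≠ 0) : z.re < 0 := by
  have hsq : (z.re - c) ^ 2 + z.im ^ 2 ≤ c ^ 2 := by
    have := pow_le_pow_left₀ dist_nonneg hz 2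
    rwa [Complex.dist_eq, Complex.sq_norm, Complex.normSq_apply, neg_sq, Complex.sub_re,
      Complex.sub_im, Complex.ofReal_re, Complex.ofReal_im, sub_zero, ← sq, ← sq] at this
  by_contra! hre
  exact h0 (Complex.ext_iff.2 ⟨by simp; nlinarith, by simp; nlinarith⟩)

namespace Matrix

variable {ι : Type*} [Fintype ι] [DecidableEq ι]

theorem re_neg_of_mem_spectrum_of_nonneg_offDiag {M : Matrix ι ι ℝ}
    (hoff : ∀ i j, i ≠ j → 0 ≤ M i j) (hrow : ∀ i, ∑ j, M i j ≤ 0) {μ : ℂ}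
    (hμ : μ ∈ spectrum ℂ (M.map Complex.ofReal)) (hμ0 : μ ≠ 0) : μ.re < 0 := by
  rw [← spectrum_toLin', ← Module.End.hasEigenvalue_iff_mem_spectrum] at hμ
  obtain ⟨k, hk⟩ := eigenvalue_mem_ball hμ
  have hradius :
      ∑ j ∈ Finset.univ.erase k, ‖M.map Complex.ofReal k j‖ = ∑ j, M k j - M k k := by
    rw [← Finset.sum_erase_eq_sub (Finset.mem_univ k)]
    refine Finset.sum_congr rfl fun j hj => ?_
    rw [map_apply, Complex.norm_real,
      Real.norm_of_nonneg (hoff k j (Finset.ne_of_mem_erase hj).symm)]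
  rw [Metric.mem_closedBall, hradius, map_apply] at hk
  have hdiag : M k k ≤ 0 := by linarith [dist_nonneg.trans hk, hrow k]
  exact Complex.re_neg_of_dist_ofReal_le hdiag (hk.trans (by linarith [hrow k])) hμ0

theorem inv_diagonal_mul_apply {K : Type*} [Field K] {r : ι → K} (hr : ∀ i, r i ≠ 0)
    (A : Matrix ι ι K) (i j : ι) : ((diagonal r)⁻¹ * A) i j = (r i)⁻¹ * A i j := by
  simp [inv_diagonal, diagonal_mul, Ring.inverse, Pi.isUnit_iff, hr]

end Matrix

theorem stmt_14_general (n : ℕ) (A : Matrix (Fin n) (Fin n) ℝ)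
    (hoff : ∀ i j, i ≠ j → 0 ≤ A i j)
    (hrow : ∀ i, ∑ j, A i j ≤ 0)
    (hspec : ∀ μ ∈ spectrum ℂ (A.map Complex.ofReal), μ.re < 0)
    (r : Fin n → ℝ) (hr : ∀ i, 0 < r i) :
    ∀ μ ∈ spectrum ℂ (((Matrix.diagonal r)⁻¹ * A).map Complex.ofReal), μ.re < 0 := by
  intro μ hμ
  have hA : IsUnit (A.map Complex.ofReal) := by
    by_contra h
    exact (hspec 0 (spectrum.zero_mem ℂ h)).false
  have hD : IsUnit ((diagonal r)⁻¹) :=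
    isUnit_nonsing_inv_iff.2 (isUnit_diagonal.2 (Pi.isUnit_iff.2 fun i => (hr i).ne'.isUnit))
  have hunit : IsUnit (((diagonal r)⁻¹ * A).map Complex.ofReal) := by
    rw [show ((diagonal r)⁻¹ * A).map Complex.ofReal = _ from
      Matrix.map_mul (f := Complex.ofRealHom)]
    exact (hD.map Complex.ofRealHom.mapMatrix).mul hA
  have hentry := inv_diagonal_mul_apply (fun i => (hr i).ne') A
  refine re_neg_of_mem_spectrum_of_nonneg_offDiag (fun i j hij => ?_) (fun i => ?_) hμ ?_
  · rw [hentry]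
    exact mul_nonneg (inv_nonneg.2 (hr i).le) (hoff i j hij)
  · simp_rw [hentry, ← Finset.mul_sum]
    exact mul_nonpos_of_nonneg_of_nonpos (inv_nonneg.2 (hr i).le) (hrow i)
  · rintro rfl
    exact (spectrum.zero_mem_iff ℂ).1 hμ hunit

/-- Row scaling by positive constants preserves the Hurwitz (stability) property of
a nonsingular subgenerator matrix. -/
theorem stmt_14 (n : ℕ) (A : Matrix (Fin n) (Fin n) ℝ)
    (hoff : ∀ i j, i ≠ j → 0 ≤ A i j)
    (hdiag : ∀ i, A i i < 0)
    (hrow : ∀ i, ∑ j, A i j ≤ 0)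
    (hspec : ∀ μ ∈ spectrum ℂ (A.map Complex.ofReal), μ.re < 0)
    (r : Fin n → ℝ) (hr : ∀ i, 0 < r i) :
    ∀ μ ∈ spectrum ℂ (((Matrix.diagonal r)⁻¹ * A).map Complex.ofReal), μ.re < 0 :=
  stmt_14_general n A hoff hrow hspec r hr
end

section
/- Let Q be an m×m subgenerator (off-diagonal entries ≥ 0, eigenvalues with negative real part) partitioned into blocks Q00, Q0+, Q+0, Q++. Then the Schur complement Q++ − Q+0·Q00^{-1}·Q0+ has nonnegative off-diagonal entries and all its eigenvalues have negative real part (Q00 is invertible since it is a principal submatrix of Q). -/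
/-!
A Metzler matrix `A` is Hurwitz exactly when it admits a certificate: a vector `x > 0` with
`A x < 0`. Given one, Gershgorin's theorem for `diag(x)⁻¹ A diag(x)` confines the spectrum to the
open left half plane, and a minimum principle for `y / x` shows that `A y ≤ 0` forces `y ≥ 0`, so
`A` is invertible with `A⁻¹ ≤ 0`. Conversely, for a Hurwitz `A` the vectors
`x t = (A - t)⁻¹ (-1)`, `t ≥ 0`, are positive for large `t`, depend continuously on `t`, and can
only lose positivity by first becoming nonnegative with a zero entry, which the Metzler sign
pattern rules out; by the intermediate value theorem `x 0` is a certificate.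

A certificate `x` of `Q` restricts to a certificate of `Q₀₀`, so `Q₀₀⁻¹ ≤ 0`. Hence the Schur
complement `Q₊₊ - Q₊₀ Q₀₀⁻¹ Q₀₊` is Metzler, and it has the certificate `x₊`, because
`S x₊ = (Q x)₊ - Q₊₀ Q₀₀⁻¹ (Q x)₀ ≤ (Q x)₊`.
-/

namespace Matrix

variable {ι : Type*}

def IsMetzler (A : Matrix ι ι ℝ) : Prop := ∀ i j, i ≠ j → 0 ≤ A i j

theorem IsMetzler.sub_smul_one [DecidableEq ι] {A : Matrix ι ι ℝ} (hA : A.IsMetzler) (t : ℝ) :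
    (A - t • 1).IsMetzler := fun i j hij => by simpa [one_apply_ne hij] using hA i j hij

section Blocks

variable {m n : Type*} {A : Matrix m m ℝ} {B : Matrix m n ℝ} {C : Matrix n m ℝ}
  {D : Matrix n n ℝ}

theorem IsMetzler.fromBlocks₁₁ (h : (fromBlocks A B C D).IsMetzler) : A.IsMetzler :=
  fun i j hij => by simpa using h (.inl i) (.inl j) (by simpa using hij)

theorem IsMetzler.fromBlocks₂₂ (h : (fromBlocks A B C D).IsMetzler) : D.IsMetzler :=
  fun i j hij => by simpa using h (.inr i) (.inr j) (by simpa using hij)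

theorem IsMetzler.fromBlocks₁₂_nonneg (h : (fromBlocks A B C D).IsMetzler) (i : m) (j : n) :
    0 ≤ B i j := by
  simpa using h (.inl i) (.inr j) Sum.inl_ne_inr

theorem IsMetzler.fromBlocks₂₁_nonneg (h : (fromBlocks A B C D).IsMetzler) (i : n) (j : m) :
    0 ≤ C i j := by
  simpa using h (.inr i) (.inl j) Sum.inr_ne_inl

theorem IsMetzler.schur [Fintype m] [DecidableEq m] (hD : D.IsMetzler) (hB : ∀ i j, 0 ≤ B i j)
    (hC : ∀ i j, 0 ≤ C i j) (hA : ∀ i j, A⁻¹ i j ≤ 0) : (D - C * A⁻¹ * B).IsMetzler := by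
  intro i j hij
  have hCAB : (C * A⁻¹ * B) i j ≤ 0 :=
    Finset.sum_nonpos fun l _ => mul_nonpos_of_nonpos_of_nonneg
      (Finset.sum_nonpos fun k _ => mul_nonpos_of_nonneg_of_nonpos (hC i k) (hA k l)) (hB l j)
  rw [sub_apply]
  linarith [hD i j hij]

variable [Fintype m] [Fintype n] {x : m ⊕ n → ℝ}

theorem fromBlocks₁₁_mulVec_neg (hB : ∀ i j, 0 ≤ B i j) (hx : ∀ i, 0 ≤ x i)
    (hQx : ∀ i, (fromBlocks A B C D *ᵥ x) i < 0) (i : m) : (A *ᵥ (x ∘ Sum.inl)) i < 0 := by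
  have hBx : 0 ≤ (B *ᵥ (x ∘ Sum.inr)) i :=
    Finset.sum_nonneg fun j _ => mul_nonneg (hB i j) (hx _)
  have := hQx (.inl i)
  rw [fromBlocks_mulVec, Sum.elim_inl, Pi.add_apply] at this
  linarith

theorem schur_mulVec_neg [DecidableEq m] (hAu : IsUnit A) (hA : ∀ i j, A⁻¹ i j ≤ 0) (hC : ∀ i j, 0 ≤ C i j)
    (hQx : ∀ i, (fromBlocks A B C D *ᵥ x) i < 0) (i : n) :
    ((D - C * A⁻¹ * B) *ᵥ (x ∘ Sum.inr)) i < 0 := by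
  set a := A *ᵥ (x ∘ Sum.inl) + B *ᵥ (x ∘ Sum.inr)
  set b := C *ᵥ (x ∘ Sum.inl) + D *ᵥ (x ∘ Sum.inr)
  have ha : ∀ k, a k < 0 := fun k => by simpa [a, fromBlocks_mulVec] using hQx (.inl k)
  have hb : b i < 0 := by simpa [b, fromBlocks_mulVec] using hQx (.inr i)
  have hS : (D - C * A⁻¹ * B) *ᵥ (x ∘ Sum.inr) = b - C *ᵥ (A⁻¹ *ᵥ a) := by
    have hAA : A⁻¹ *ᵥ (A *ᵥ (x ∘ Sum.inl)) = x ∘ Sum.inl := by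
      rw [mulVec_mulVec, nonsing_inv_mul _ ((isUnit_iff_isUnit_det A).1 hAu), one_mulVec]
    simp only [a, b, sub_mulVec, ← mulVec_mulVec, mulVec_add, hAA]
    abel
  have hCAa : 0 ≤ (C *ᵥ (A⁻¹ *ᵥ a)) i :=
    Finset.sum_nonneg fun k _ => mul_nonneg (hC i k)
      (Finset.sum_nonneg fun l _ => mul_nonneg_of_nonpos_of_nonpos (hA k l) (ha l).le)
  rw [hS, Pi.sub_apply]
  linarith

end Blocks

variable [Fintype ι]

def IsHurwitz [DecidableEq ι] (A : Matrix ι ι ℝ) : Prop :=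
  ∀ μ ∈ spectrum ℂ (A.map Complex.ofReal), μ.re < 0

namespace IsMetzler

variable {A : Matrix ι ι ℝ}

theorem pos_of_mulVec_neg (hA : A.IsMetzler) {y : ι → ℝ} (hy : ∀ j, 0 ≤ y j) {i : ι}
    (hAy : (A *ᵥ y) i < 0) : 0 < y i := by
  refine (hy i).lt_of_ne fun hyi => hAy.not_ge (Finset.sum_nonneg fun j _ => ?_)
  rcases eq_or_ne i j with rfl | hij
  · simp [← hyi]
  · exact mul_nonneg (hA i j hij) (hy j)

theorem nonneg_of_mulVec_nonpos (hA : A.IsMetzler) {x y : ι → ℝ} (hx : ∀ i, 0 < x i)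
    (hAx : ∀ i, (A *ᵥ x) i < 0) (hAy : ∀ i, (A *ᵥ y) i ≤ 0) (j : ι) : 0 ≤ y j := by
  by_contra! hyj
  obtain ⟨i, -, hi⟩ := Finset.exists_min_image Finset.univ (fun k => y k / x k)
    ⟨j, Finset.mem_univ j⟩
  set c := y i / x i
  have hc : c < 0 := (hi j (Finset.mem_univ j)).trans_lt (div_neg_of_neg_of_pos hyj (hx j))
  -- `y - c • x` is nonnegative and vanishes at `i`, yet `A` maps it to a vector negative at `i`
  have hz : ∀ k, 0 ≤ (y - c • x) k := fun k => by
    have := (le_div_iff₀ (hx k)).1 (hi k (Finset.mem_univ k))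
    simp only [Pi.sub_apply, Pi.smul_apply, smul_eq_mul]
    linarith
  have hzi : (y - c • x) i = 0 := by simp [c, div_mul_cancel₀ _ (hx i).ne']
  have hAz : (A *ᵥ (y - c • x)) i < 0 := by
    simp only [mulVec_sub, mulVec_smul, Pi.sub_apply, Pi.smul_apply, smul_eq_mul]
    nlinarith [hAy i, hAx i]
  exact (hA.pos_of_mulVec_neg hz hAz).ne' hzi

variable [DecidableEq ι] {x : ι → ℝ}

theorem isUnit (hA : A.IsMetzler) (hx : ∀ i, 0 < x i) (hAx : ∀ i, (A *ᵥ x) i < 0) :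
    IsUnit A := by
  refine (isUnit_iff_isUnit_det A).2 (isUnit_iff_ne_zero.2 fun h => ?_)
  obtain ⟨v, hv, hAv⟩ := exists_mulVec_eq_zero_iff.2 h
  have hv₁ := hA.nonneg_of_mulVec_nonpos hx hAx (y := v) (by simp [hAv])
  have hv₂ := hA.nonneg_of_mulVec_nonpos hx hAx (y := -v) (by simp [mulVec_neg, hAv])
  exact hv (funext fun i => le_antisymm (by simpa using hv₂ i) (hv₁ i))

theorem inv_nonpos (hA : A.IsMetzler) (hx : ∀ i, 0 < x i) (hAx : ∀ i, (A *ᵥ x) i < 0)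
    (i j : ι) : A⁻¹ i j ≤ 0 := by
  have hcol : A *ᵥ -(A⁻¹ *ᵥ Pi.single j 1) = -Pi.single j 1 := by
    rw [mulVec_neg, mulVec_mulVec,
      mul_nonsing_inv _ ((isUnit_iff_isUnit_det A).1 (hA.isUnit hx hAx)), one_mulVec]
  have := hA.nonneg_of_mulVec_nonpos hx hAx (y := -(A⁻¹ *ᵥ Pi.single j 1))
    (fun k => by rw [hcol]; simp [Pi.single_apply]; split_ifs <;> norm_num) i
  simpa [mulVec_single_one] using this

theorem isHurwitz (hA : A.IsMetzler) (hx : ∀ i, 0 < x i) (hAx : ∀ i, (A *ᵥ x) i < 0) :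
    A.IsHurwitz := by
  intro μ hμ
  have hx0 : ∀ i, (x i : ℂ) ≠ 0 := fun i => Complex.ofReal_ne_zero.2 (hx i).ne'
  let u : (Matrix ι ι ℂ)ˣ :=
    ⟨diagonal fun i => (x i : ℂ), diagonal fun i => (x i : ℂ)⁻¹,
      by simp [diagonal_mul_diagonal, hx0], by simp [diagonal_mul_diagonal, hx0]⟩
  rw [← spectrum.units_conjugate' (u := u), ← spectrum_toLin',
    ← Module.End.hasEigenvalue_iff_mem_spectrum] at hμ
  obtain ⟨k, hk⟩ := eigenvalue_mem_ball hμ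
  simp only [u, Units.inv_mk, Units.val_mk, diagonal_mul, mul_diagonal, map_apply,
    Metric.mem_closedBall, dist_eq_norm] at hk
  have hdiag : (x k : ℂ)⁻¹ * A k k * x k = A k k := by field_simp [hx0 k]
  have hrad : ∀ j ∈ Finset.univ.erase k, ‖(x k : ℂ)⁻¹ * A k j * x j‖ = A k j * x j / x k := by
    intro j hj
    have hAkj := hA k j (Finset.ne_of_mem_erase hj).symm
    rw [← Complex.ofReal_inv, ← Complex.ofReal_mul, ← Complex.ofReal_mul, Complex.norm_real,
      Real.norm_of_nonneg (by have := hx k; have := hx j; positivity)]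
    ring
  have hrow : ∑ j ∈ Finset.univ.erase k, A k j * x j = (A *ᵥ x) k - A k k * x k :=
    Finset.sum_erase_eq_sub (Finset.mem_univ k)
  rw [hdiag, Finset.sum_congr rfl hrad, ← Finset.sum_div, hrow] at hk
  have hlt : ((A *ᵥ x) k - A k k * x k) / x k < -A k k := by
    rw [div_lt_iff₀ (hx k)]
    linarith [hAx k]
  have hre := Complex.re_le_norm (μ - A k k)
  rw [Complex.sub_re, Complex.ofReal_re] at hre
  linarith

end IsMetzler

theorem sub_smul_one_mulVec_one_neg [DecidableEq ι] (A : Matrix ι ι ℝ) {t : ℝ}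
    (ht : ∑ i, ∑ j, |A i j| < t) (i : ι) : ((A - t • 1) *ᵥ 1) i < 0 := by
  have hrow : ∑ j, A i j ≤ ∑ i, ∑ j, |A i j| :=
    (Finset.sum_le_sum fun j _ => le_abs_self (A i j)).trans
      (Finset.single_le_sum (f := fun i => ∑ j, |A i j|) (fun _ _ => by positivity)
        (Finset.mem_univ i))
  have hsum : ((A - t • 1) *ᵥ 1) i = ∑ j, A i j - t := by simp [mulVec, dotProduct, one_apply]
  rw [hsum]
  linarith

namespace IsHurwitz

variable [DecidableEq ι] {A : Matrix ι ι ℝ}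

theorem isUnit_sub_smul_one (hA : A.IsHurwitz) {t : ℝ} (ht : 0 ≤ t) : IsUnit (A - t • 1) := by
  have ht' : (t : ℂ) ∉ spectrum ℂ (A.map Complex.ofReal) := fun h =>
    (hA _ h).not_ge (by simpa using ht)
  have hmap : (A - t • 1).map Complex.ofReal = -(algebraMap ℂ _ t - A.map Complex.ofReal) := by
    ext i j
    by_cases hij : i = j <;> simp [algebraMap_matrix_apply, hij]
  have hdet : ((A - t • 1).map Complex.ofReal).det = ((A - t • 1).det : ℂ) :=
    (RingHom.map_det Complex.ofRealHom _).symm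
  rw [spectrum.notMem_iff, ← IsUnit.neg_iff, ← hmap, isUnit_iff_isUnit_det, hdet] at ht'
  rw [isUnit_iff_isUnit_det, isUnit_iff_ne_zero]
  exact fun h => by simp [h] at ht'

theorem continuousOn_inv_sub_smul_one (hA : A.IsHurwitz) :
    ContinuousOn (fun t : ℝ => (A - t • 1)⁻¹) (Set.Ici 0) := by
  intro t ht
  have hdet := ((isUnit_iff_isUnit_det _).1 (hA.isUnit_sub_smul_one ht)).ne_zero
  refine ContinuousAt.continuousWithinAt ?_
  exact (continuousAt_matrix_inv _ (by rw [Ring.inverse_eq_inv']; exact continuousAt_inv₀ hdet)).comp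
    (by fun_prop)

theorem exists_pos_mulVec_neg (hA : A.IsHurwitz) (hM : A.IsMetzler) :
    ∃ x : ι → ℝ, (∀ i, 0 < x i) ∧ ∀ i, (A *ᵥ x) i < 0 := by
  rcases isEmpty_or_nonempty ι with hι | hι
  · exact ⟨0, isEmptyElim, isEmptyElim⟩
  set x : ℝ → ι → ℝ := fun t => (A - t • 1)⁻¹ *ᵥ fun _ => -1 with hx_def
  have hAx : ∀ t, 0 ≤ t → (A - t • 1) *ᵥ x t = fun _ => -1 := fun t ht => by
    rw [hx_def, mulVec_mulVec, mul_nonsing_inv _ ((isUnit_iff_isUnit_det _).1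
      (hA.isUnit_sub_smul_one ht)), one_mulVec]
  have hpos : ∀ t, 0 ≤ t → (∀ i, 0 ≤ x t i) → ∀ i, 0 < x t i := fun t ht hxt i =>
    (hM.sub_smul_one t).pos_of_mulVec_neg hxt (by rw [hAx t ht]; norm_num)
  set t₀ := ∑ i, ∑ j, |A i j| + 1
  have ht₀ : 0 ≤ t₀ := by positivity
  have hx₀ : ∀ i, 0 < x t₀ i :=
    hpos t₀ ht₀ ((hM.sub_smul_one t₀).nonneg_of_mulVec_nonpos (fun _ => one_pos)
      (sub_smul_one_mulVec_one_neg A (lt_add_one _)) fun i => by rw [hAx t₀ ht₀]; norm_num)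
  -- the smallest entry of `x t`, which stays positive down to `t = 0`
  let g : ℝ → ℝ := fun t => Finset.univ.inf' Finset.univ_nonempty (x t)
  have hg : ContinuousOn g (Set.Icc 0 t₀) :=
    ContinuousOn.finset_inf'_apply _ fun i _ =>
      ((continuous_apply i).comp (continuous_id.matrix_mulVec continuous_const)).comp_continuousOn
        (hA.continuousOn_inv_sub_smul_one.mono Set.Icc_subset_Ici_self)
  refine ⟨x 0, fun i => ?_, fun i => ?_⟩
  · by_contra! hx0
    obtain ⟨t, ht, hgt⟩ : 0 ∈ g '' Set.Icc 0 t₀ := intermediate_value_Icc ht₀ hg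
      ⟨(Finset.inf'_le _ (Finset.mem_univ i)).trans hx0,
        (Finset.le_inf'_iff _ _).2 fun i _ => (hx₀ i).le⟩
    have hxt := hpos t ht.1 fun j => (Finset.le_inf'_iff _ _).1 hgt.ge j (Finset.mem_univ j)
    exact hgt.not_gt ((Finset.lt_inf'_iff _).2 fun j _ => hxt j)
  · have h0 := hAx 0 le_rfl
    rw [zero_smul, sub_zero] at h0
    simp [h0]

end IsHurwitz

end Matrix

open Matrix

/-- The Schur complement `Q++ − Q+0·Q00⁻¹·Q0+` of a subgenerator is again a
subgenerator: `Q00` is invertible, the off-diagonal entries of the Schur complement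
are nonnegative, and all its eigenvalues have negative real part. -/
theorem stmt_15 (k n : ℕ)
    (Q00 : Matrix (Fin k) (Fin k) ℝ) (Q0p : Matrix (Fin k) (Fin n) ℝ)
    (Qp0 : Matrix (Fin n) (Fin k) ℝ) (Qpp : Matrix (Fin n) (Fin n) ℝ)
    (Q : Matrix (Fin k ⊕ Fin n) (Fin k ⊕ Fin n) ℝ)
    (hQ : Q = fromBlocks Q00 Q0p Qp0 Qpp)
    (hoff : ∀ i j, i ≠ j → 0 ≤ Q i j)
    (hspec : ∀ μ ∈ spectrum ℂ (Q.map Complex.ofReal), μ.re < 0) :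
    IsUnit Q00 ∧
    (∀ i j, i ≠ j → 0 ≤ (Qpp - Qp0 * Q00⁻¹ * Q0p) i j) ∧
    (∀ μ ∈ spectrum ℂ ((Qpp - Qp0 * Q00⁻¹ * Q0p).map Complex.ofReal), μ.re < 0) := by
  subst hQ
  have hM : (fromBlocks Q00 Q0p Qp0 Qpp).IsMetzler := hoff
  obtain ⟨x, hx, hQx⟩ := IsHurwitz.exists_pos_mulVec_neg hspec hM
  have hx₀ : ∀ i, (Q00 *ᵥ (x ∘ Sum.inl)) i < 0 :=
    fromBlocks₁₁_mulVec_neg hM.fromBlocks₁₂_nonneg (fun i => (hx i).le) hQx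
  have hunit := hM.fromBlocks₁₁.isUnit (fun _ => hx _) hx₀
  have hinv := hM.fromBlocks₁₁.inv_nonpos (fun _ => hx _) hx₀
  have hS := hM.fromBlocks₂₂.schur hM.fromBlocks₁₂_nonneg hM.fromBlocks₂₁_nonneg hinv
  exact ⟨hunit, hS,
    hS.isHurwitz (fun _ => hx _) (schur_mulVec_neg hunit hinv hM.fromBlocks₂₁_nonneg hQx)⟩
end
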